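/- Fix n ∈ ℕ. For every w ≥ 0 and every x ∈ (0,1), the matrix polynomial F_w satisfies the second order differential equation x(1−x)·F_w''(x) + F_w'(x)·[[2−(n+4)x, 0],[0, 2−(n+3)x]] + (1/x)·F_w(x)·[[−1, 1−x],[1, −1+x]] = Λ_w·F_w(x), where Λ_w = [[−w(w+n+3), 0],[0, −w(w+n+4)−n−2]]. -/

import Mathlib

open scoped Matrix

/-- The Pochhammer symbol `(a)ₖ = a (a+1) ⋯ (a+k-1)`. -/
noncomputable def poch (a : ℂ) (k : ℕ) : ℂ := ∏ i ∈ Finset.range k, (a + i)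

/-- The constant `c = (w+1)(w+n+3) / ((w+1)(w+n+3)+n)`. -/
noncomputable def cP (n w : ℕ) : ℂ :=
  (((w : ℂ) + 1) * ((w : ℂ) + n + 3)) / (((w : ℂ) + 1) * ((w : ℂ) + n + 3) + n)

/-- The matrix function `F_w`, whose entries are the terminating hypergeometric series
`₃F₂(-w, w+n+3, 2; 3, 1; x)`, `₂F₁(-w, w+n+3; 3; x)`, `₂F₁(-w, w+n+4; 3; x)` and
`₃F₂(-w-1, w+n+3, c+1; 3, c; x)`. -/
noncomputable def Fmat (n w : ℕ) (x : ℝ) : Matrix (Fin 2) (Fin 2) ℂ :=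
  !![∑ k ∈ Finset.range (w + 1),
        (poch (-(w : ℂ)) k * poch ((w : ℂ) + n + 3) k * poch 2 k) /
          (poch 3 k * poch 1 k * (Nat.factorial k : ℂ)) * (x : ℂ) ^ k,
     ∑ k ∈ Finset.range (w + 1),
        (poch (-(w : ℂ)) k * poch ((w : ℂ) + n + 3) k) /
          (poch 3 k * (Nat.factorial k : ℂ)) * (x : ℂ) ^ k;
     ∑ k ∈ Finset.range (w + 1),
        (poch (-(w : ℂ)) k * poch ((w : ℂ) + n + 4) k) /
          (poch 3 k * (Nat.factorial k : ℂ)) * (x : ℂ) ^ k,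
     ∑ k ∈ Finset.range (w + 2),
        (poch (-(w : ℂ) - 1) k * poch ((w : ℂ) + n + 3) k * poch (cP n w + 1) k) /
          (poch 3 k * poch (cP n w) k * (Nat.factorial k : ℂ)) * (x : ℂ) ^ k]

/-- The entrywise derivative of `F_w`. -/
noncomputable def Fmat' (n w : ℕ) (x : ℝ) : Matrix (Fin 2) (Fin 2) ℂ :=
  Matrix.of fun i j => deriv (fun t : ℝ => Fmat n w t i j) x

/-- The entrywise second derivative of `F_w`. -/
noncomputable def Fmat'' (n w : ℕ) (x : ℝ) : Matrix (Fin 2) (Fin 2) ℂ :=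
  Matrix.of fun i j => deriv (fun t : ℝ => Fmat' n w t i j) x

/-!
Each entry `p` of `F_w` is a polynomial, and after multiplication by `x` the corresponding entry
of the equation becomes the polynomial identity `x · (x(1-x) p'' + (2 - s x) p' - λ p) + q = 0`,
with `q` coming from `F A₀`. Comparing coefficients of `x^(k+1)` reduces it to a relation between
consecutive Taylor coefficients, which follows from the ratio `(a+k)(b+k) / ((k+1)(k+3))` of
consecutive coefficients of `₂F₁(a, b; 3; x)`. In the second row the contiguity relation
`a b (a+1)ₖ (b+1)ₖ = (a+k)(b+k) (a)ₖ (b)ₖ` makes all coefficients rational multiples of those of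
`₂F₁(-w-1, w+n+3; 3; x)`.
-/

open Polynomial

lemma poch_succ (a : ℂ) (k : ℕ) : poch a (k + 1) = poch a k * (a + k) :=
  Finset.prod_range_succ _ _

lemma poch_succ' (a : ℂ) (k : ℕ) : poch a (k + 1) = a * poch (a + 1) k := by
  simp only [poch, Finset.prod_range_succ', Nat.cast_add, Nat.cast_one, Nat.cast_zero, add_zero,
    add_assoc, add_comm (1 : ℂ), mul_comm]

lemma poch_ne_zero {a : ℂ} (h : ∀ i : ℕ, a + i ≠ 0) (k : ℕ) : poch a k ≠ 0 :=
  Finset.prod_ne_zero_iff.mpr fun i _ => h i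

lemma poch_natCast_ne_zero {m : ℕ} (hm : m ≠ 0) (k : ℕ) : poch m k ≠ 0 :=
  poch_ne_zero (fun i => by norm_cast; omega) k

lemma poch_neg_natCast_of_lt {m k : ℕ} (h : m < k) : poch (-(m : ℂ)) k = 0 :=
  Finset.prod_eq_zero (Finset.mem_range.mpr h) (by simp)

lemma poch_two (k : ℕ) : poch 2 k = (k + 1) * poch 1 k := by
  induction k with
  | zero => simp [poch]
  | succ k ih => rw [poch_succ, ih, poch_succ]; push_cast; ring

lemma poch_add_one_mul (a : ℂ) (k : ℕ) : a * poch (a + 1) k = (a + k) * poch a k := by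
  rw [← poch_succ', poch_succ, mul_comm]

/-- The `k`-th coefficient of `₂F₁(a, b; 3; x)`. -/
noncomputable def gaussCoeff (a b : ℂ) (k : ℕ) : ℂ :=
  poch a k * poch b k / (poch 3 k * (Nat.factorial k : ℂ))

lemma poch_three_mul_factorial_ne_zero (k : ℕ) : poch 3 k * (Nat.factorial k : ℂ) ≠ 0 :=
  mul_ne_zero (by exact_mod_cast poch_natCast_ne_zero three_ne_zero k)
    (Nat.cast_ne_zero.mpr k.factorial_ne_zero)

lemma gaussCoeff_zero (a b : ℂ) : gaussCoeff a b 0 = 1 := by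
  simp [gaussCoeff, poch]

lemma gaussCoeff_succ (a b : ℂ) (k : ℕ) :
    gaussCoeff a b (k + 1) = (a + k) * (b + k) / ((k + 1) * (k + 3)) * gaussCoeff a b k := by
  have hk : (k + 1 : ℂ) * (k + 3) ≠ 0 := by norm_cast
  have := poch_three_mul_factorial_ne_zero k
  simp only [gaussCoeff, poch_succ, Nat.factorial_succ]
  push_cast
  field_simp
  ring

lemma gaussCoeff_add_one (a b : ℂ) (k : ℕ) :
    a * b * gaussCoeff (a + 1) (b + 1) k = (a + k) * (b + k) * gaussCoeff a b k := by
  simp only [gaussCoeff, mul_div_assoc']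
  congr 1
  linear_combination b * poch (b + 1) k * poch_add_one_mul a k
    + (a + k) * poch a k * poch_add_one_mul b k

lemma gaussCoeff_neg_natCast_of_lt (b : ℂ) {m k : ℕ} (h : m < k) :
    gaussCoeff (-(m : ℂ)) b k = 0 := by
  simp [gaussCoeff, poch_neg_natCast_of_lt h]

lemma poch_two_term_eq_gaussCoeff (a b : ℂ) (k : ℕ) :
    poch a k * poch b k * poch 2 k / (poch 3 k * poch 1 k * (Nat.factorial k : ℂ)) =
      (k + 1) * gaussCoeff a b k := by
  have := poch_natCast_ne_zero one_ne_zero k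
  push_cast at this
  rw [gaussCoeff, poch_two]
  field_simp

lemma poch_add_one_term_eq_gaussCoeff (a b : ℂ) {c : ℂ} (hc : ∀ i : ℕ, c + i ≠ 0) (k : ℕ) :
    poch a k * poch b k * poch (c + 1) k / (poch 3 k * poch c k * (Nat.factorial k : ℂ)) =
      (c + k) / c * gaussCoeff a b k := by
  have hc0 : c ≠ 0 := by simpa using hc 0
  have := poch_ne_zero hc k
  have := poch_three_mul_factorial_ne_zero k
  rw [gaussCoeff]
  field_simp
  congr 1
  linear_combination poch a k * poch b k * poch_add_one_mul c k

lemma cP_add_natCast_ne_zero (n w i : ℕ) : cP n w + i ≠ 0 := by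
  have hQ : ((w : ℂ) + 1) * ((w : ℂ) + n + 3) + n ≠ 0 := by norm_cast; positivity
  rw [cP, div_add' _ _ _ hQ]
  exact div_ne_zero (by norm_cast; positivity) hQ

lemma cP_ne_zero (n w : ℕ) : cP n w ≠ 0 := by
  simpa using cP_add_natCast_ne_zero n w 0

noncomputable def polyOfCoeffs (c : ℕ → ℂ) (N : ℕ) : ℂ[X] :=
  ∑ k ∈ Finset.range N, monomial k (c k)

lemma coeff_polyOfCoeffs {c : ℕ → ℂ} {N : ℕ} (hc : ∀ k, N ≤ k → c k = 0) (k : ℕ) :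
    (polyOfCoeffs c N).coeff k = c k := by
  by_cases hk : k < N
  · simp [polyOfCoeffs, coeff_monomial, hk]
  · simp [polyOfCoeffs, coeff_monomial, hk, hc k (not_lt.mp hk)]

lemma eval_polyOfCoeffs (c : ℕ → ℂ) (N : ℕ) (x : ℂ) :
    (polyOfCoeffs c N).eval x = ∑ k ∈ Finset.range N, c k * x ^ k := by
  simp [polyOfCoeffs, eval_finsetSum]

lemma deriv_eval_ofReal (p : ℂ[X]) (x : ℝ) :
    deriv (fun t : ℝ => p.eval (t : ℂ)) x = (derivative p).eval (x : ℂ) :=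
  (p.hasDerivAt (x : ℂ)).comp_ofReal.deriv

lemma coeff_X_mul_derivative (p : ℂ[X]) (k : ℕ) :
    (X * derivative p).coeff k = k * p.coeff k := by
  cases k with
  | zero => simp
  | succ k => simp [coeff_derivative, mul_comm]

lemma coeff_X_sq_mul_derivative_derivative (p : ℂ[X]) (k : ℕ) :
    (X ^ 2 * derivative (derivative p)).coeff k = k * (k - 1) * p.coeff k := by
  match k with
  | 0 => simp
  | 1 => simp [pow_two, mul_assoc]
  | k + 2 =>
    rw [pow_two, mul_assoc, coeff_X_mul, coeff_X_mul, coeff_derivative, coeff_derivative]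
    push_cast
    ring

noncomputable def gaussOperator (s l : ℂ) (p : ℂ[X]) : ℂ[X] :=
  X * (1 - X) * derivative (derivative p) + (2 - C s * X) * derivative p - C l * p

lemma X_mul_gaussOperator_add_eq_zero {s l : ℂ} {p q : ℂ[X]} (h0 : q.coeff 0 = 0)
    (hrec : ∀ k : ℕ, (k + 1) * (k + 2) * p.coeff (k + 1) + q.coeff (k + 1) =
      (k * (k - 1) + s * k + l) * p.coeff k) :
    X * gaussOperator s l p + q = 0 := by
  have hexpand : X * gaussOperator s l p + q =
      X ^ 2 * derivative (derivative p) - X * (X ^ 2 * derivative (derivative p))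
        + (X * derivative p + X * derivative p) - C s * (X * (X * derivative p))
        - C l * (X * p) + q := by
    simp only [gaussOperator]; ring
  ext k
  rw [hexpand]
  cases k with
  | zero => simp [h0]
  | succ k =>
    simp only [coeff_add, coeff_sub, coeff_C_mul, coeff_X_mul, coeff_X_sq_mul_derivative_derivative,
      coeff_X_mul_derivative, coeff_derivative, coeff_zero]
    push_cast
    linear_combination hrec k

lemma gaussOperator_eval_of_X_mul_add_eq_zero {s l : ℂ} {p q : ℂ[X]}
    (h : X * gaussOperator s l p + q = 0) {x : ℂ} (hx : x ≠ 0) :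
    x * (1 - x) * (derivative (derivative p)).eval x + (derivative p).eval x * (2 - s * x)
      + x⁻¹ * q.eval x = l * p.eval x := by
  have hx' := congrArg (eval x) h
  simp only [gaussOperator, eval_add, eval_sub, eval_mul, eval_X, eval_C, eval_one, eval_ofNat,
    eval_zero] at hx'
  field_simp
  linear_combination hx'

/-- `(2)ₖ / (1)ₖ = k + 1` and `(c+1)ₖ / (c)ₖ = (c+k) / c` reduce the two `₃F₂` entries to multiples
of `₂F₁` coefficients. -/
noncomputable def Fpoly (n w : ℕ) : Matrix (Fin 2) (Fin 2) ℂ[X] :=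
  !![polyOfCoeffs (fun k => (k + 1) * gaussCoeff (-w) (w + n + 3) k) (w + 1),
     polyOfCoeffs (gaussCoeff (-w) (w + n + 3)) (w + 1);
     polyOfCoeffs (gaussCoeff (-w) (w + n + 4)) (w + 1),
     polyOfCoeffs (fun k => (cP n w + k) / cP n w * gaussCoeff (-w - 1) (w + n + 3) k) (w + 2)]

section Fpoly

variable (n w : ℕ)

lemma Fmat_apply_eq_eval (t : ℝ) (i j : Fin 2) :
    Fmat n w t i j = (Fpoly n w i j).eval (t : ℂ) := by
  fin_cases i <;> fin_cases j <;> simp [Fmat, Fpoly, eval_polyOfCoeffs]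
  · simp only [poch_two_term_eq_gaussCoeff]
  · rfl
  · rfl
  · simp only [poch_add_one_term_eq_gaussCoeff _ _ (cP_add_natCast_ne_zero n w)]

lemma Fmat'_apply_eq_eval (t : ℝ) (i j : Fin 2) :
    Fmat' n w t i j = (derivative (Fpoly n w i j)).eval (t : ℂ) := by
  simp only [Fmat', Matrix.of_apply, Fmat_apply_eq_eval, deriv_eval_ofReal]

lemma Fmat''_apply_eq_eval (t : ℝ) (i j : Fin 2) :
    Fmat'' n w t i j = (derivative (derivative (Fpoly n w i j))).eval (t : ℂ) := by
  simp only [Fmat'', Matrix.of_apply, Fmat'_apply_eq_eval, deriv_eval_ofReal]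

lemma coeff_Fpoly_zero_zero (k : ℕ) :
    (Fpoly n w 0 0).coeff k = (k + 1) * gaussCoeff (-w) (w + n + 3) k := by
  refine coeff_polyOfCoeffs (fun k hk => ?_) k
  rw [gaussCoeff_neg_natCast_of_lt _ (by omega), mul_zero]

lemma coeff_Fpoly_zero_one (k : ℕ) : (Fpoly n w 0 1).coeff k = gaussCoeff (-w) (w + n + 3) k :=
  coeff_polyOfCoeffs (fun _ hk => gaussCoeff_neg_natCast_of_lt _ (by omega)) k

lemma coeff_Fpoly_one_zero (k : ℕ) : (Fpoly n w 1 0).coeff k = gaussCoeff (-w) (w + n + 4) k :=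
  coeff_polyOfCoeffs (fun _ hk => gaussCoeff_neg_natCast_of_lt _ (by omega)) k

lemma coeff_Fpoly_one_one (k : ℕ) :
    (Fpoly n w 1 1).coeff k = (cP n w + k) / cP n w * gaussCoeff (-w - 1) (w + n + 3) k := by
  refine coeff_polyOfCoeffs (fun k hk => ?_) k
  have : -(w : ℂ) - 1 = -((w + 1 : ℕ) : ℂ) := by push_cast; ring
  rw [this, gaussCoeff_neg_natCast_of_lt _ (by omega), mul_zero]

lemma Fpoly_zero_zero_ode :
    X * gaussOperator (n + 4) (-w * (w + n + 3)) (Fpoly n w 0 0) + (Fpoly n w 0 1 - Fpoly n w 0 0)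
      = 0 := by
  apply X_mul_gaussOperator_add_eq_zero
  · simp [coeff_Fpoly_zero_zero, coeff_Fpoly_zero_one]
  · intro k
    simp only [coeff_sub, coeff_Fpoly_zero_zero, coeff_Fpoly_zero_one, gaussCoeff_succ]
    have : (k + 3 : ℂ) ≠ 0 := by norm_cast
    push_cast
    field_simp
    ring

lemma Fpoly_zero_one_ode :
    X * gaussOperator (n + 3) (-w * (w + n + 3)) (Fpoly n w 0 1)
      + (1 - X) * (Fpoly n w 0 0 - Fpoly n w 0 1) = 0 := by
  apply X_mul_gaussOperator_add_eq_zero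
  · simp [coeff_Fpoly_zero_zero, coeff_Fpoly_zero_one]
  · intro k
    simp only [sub_mul, one_mul, coeff_sub, coeff_X_mul, coeff_Fpoly_zero_zero,
      coeff_Fpoly_zero_one, gaussCoeff_succ]
    have : (k + 3 : ℂ) ≠ 0 := by norm_cast
    push_cast
    field_simp
    ring

lemma gaussCoeff_contiguous (k : ℕ) :
    gaussCoeff (-w) (w + n + 4) k =
      (k - w - 1) * (k + w + n + 3) / (-(w + 1) * (w + n + 3)) *
        gaussCoeff (-w - 1) (w + n + 3) k := by
  have h := gaussCoeff_add_one (-(w : ℂ) - 1) (w + n + 3) k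
  rw [show -(w : ℂ) - 1 + 1 = -w by ring, show (w : ℂ) + n + 3 + 1 = w + n + 4 by ring] at h
  have : -((w : ℂ) + 1) * (w + n + 3) ≠ 0 := by
    rw [neg_mul, neg_ne_zero]; norm_cast
  rw [div_mul_eq_mul_div, eq_div_iff this]
  linear_combination h

lemma Fpoly_one_zero_ode :
    X * gaussOperator (n + 4) (-w * (w + n + 4) - n - 2) (Fpoly n w 1 0)
      + (Fpoly n w 1 1 - Fpoly n w 1 0) = 0 := by
  apply X_mul_gaussOperator_add_eq_zero
  · simp [coeff_Fpoly_one_zero, coeff_Fpoly_one_one, gaussCoeff_zero, cP_ne_zero]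
  · intro k
    simp only [coeff_sub, coeff_Fpoly_one_zero, coeff_Fpoly_one_one, gaussCoeff_contiguous,
      gaussCoeff_succ, cP]
    have : (k + 3 : ℂ) ≠ 0 := by norm_cast
    have : (w + n + 3 : ℂ) ≠ 0 := by norm_cast
    have : ((w + 1) * (w + n + 3) + n : ℂ) ≠ 0 := by norm_cast; positivity
    push_cast
    field_simp
    ring

lemma Fpoly_one_one_ode :
    X * gaussOperator (n + 3) (-w * (w + n + 4) - n - 2) (Fpoly n w 1 1)
      + (1 - X) * (Fpoly n w 1 0 - Fpoly n w 1 1) = 0 := by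
  apply X_mul_gaussOperator_add_eq_zero
  · simp [coeff_Fpoly_one_zero, coeff_Fpoly_one_one, gaussCoeff_zero, cP_ne_zero]
  · intro k
    simp only [sub_mul, one_mul, coeff_sub, coeff_X_mul, coeff_Fpoly_one_zero, coeff_Fpoly_one_one,
      gaussCoeff_contiguous, gaussCoeff_succ, cP]
    have : (k + 3 : ℂ) ≠ 0 := by norm_cast
    have : (w + n + 3 : ℂ) ≠ 0 := by norm_cast
    have : ((w + 1) * (w + n + 3) + n : ℂ) ≠ 0 := by norm_cast; positivity
    push_cast
    field_simp
    ring

end Fpoly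

/-- the matrix polynomials `F_w` satisfy
`x(1-x) F_w'' + F_w' A₁(x) + (1/x) F_w A₀(x) = Λ_w F_w` on `(0,1)`, where
`A₁(x) = diag(2-(n+4)x, 2-(n+3)x)`, `A₀(x) = [[-1, 1-x],[1, -1+x]]` and
`Λ_w = diag(-w(w+n+3), -w(w+n+4)-n-2)`. -/
theorem Fmat_differential_equation (n : ℕ) :
    ∀ w : ℕ, ∀ x ∈ Set.Ioo (0 : ℝ) 1,
      ((x : ℂ) * (1 - (x : ℂ))) • Fmat'' n w x +
        Fmat' n w x * !![2 - ((n : ℂ) + 4) * (x : ℂ), 0;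
                         0, 2 - ((n : ℂ) + 3) * (x : ℂ)] +
        (1 / (x : ℂ)) • (Fmat n w x * !![-1, 1 - (x : ℂ); 1, -1 + (x : ℂ)]) =
      !![-(w : ℂ) * ((w : ℂ) + n + 3), 0;
         0, -(w : ℂ) * ((w : ℂ) + n + 4) - (n : ℂ) - 2] * Fmat n w x := by
  intro w x hx
  have hx0 : (x : ℂ) ≠ 0 := Complex.ofReal_ne_zero.mpr hx.1.ne'
  have e00 := gaussOperator_eval_of_X_mul_add_eq_zero (Fpoly_zero_zero_ode n w) hx0
  have e01 := gaussOperator_eval_of_X_mul_add_eq_zero (Fpoly_zero_one_ode n w) hx0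
  have e10 := gaussOperator_eval_of_X_mul_add_eq_zero (Fpoly_one_zero_ode n w) hx0
  have e11 := gaussOperator_eval_of_X_mul_add_eq_zero (Fpoly_one_one_ode n w) hx0
  simp only [eval_sub, eval_mul, eval_one, eval_X] at e00 e01 e10 e11
  ext i j
  fin_cases i <;> fin_cases j <;>
    simp [Matrix.mul_apply, Fin.sum_univ_two, Fmat_apply_eq_eval, Fmat'_apply_eq_eval,
      Fmat''_apply_eq_eval]
  · linear_combination e00
  · linear_combination e01
  · linear_combination e10
  · linear_combination e11
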